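/- arXiv:1111.4468 — 2 statements merged into one kernel-verified Lean document; each statement's English description precedes it below -/
import Mathlib

section
/- Let Q be a finite directed graph (quiver). An arrow e from vertex a to vertex b lies in a bi-infinite directed path if and only if there is a directed cycle from which a is reachable by a directed path (a cycle upstream from e) and a directed cycle reachable from b by a directed path (a cycle downstream from e). -/
/-!
A bi-infinite path through `a → b` is an infinite path backwards from `a` glued to one forwards
from `b`; these are exactly witnesses that `a` is not `Q`-accessible and that `b` is not accessible
for the reversed relation. In a finite quiver, a vertex is inaccessible if and only if
a cycle lies upstream from it: an infinite descending chain must revisit a vertex, and conversely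
an accessible vertex has only accessible predecessors, none of which can lie on a cycle.
-/

open Relation Function

namespace Acc

variable {α : Type*} {r : α → α → Prop}

theorem not_rel_self {a : α} (h : Acc r a) : ¬r a a := by
  induction h with
  | intro x _ ih => exact fun hx => ih x hx hx

theorem inv_of_reflTransGen {x y : α} (h : Acc r x) (hyx : ReflTransGen r y x) : Acc r y :=
  (reflTransGen_iff_eq_or_transGen.mp hyx).elim (· ▸ h) h.inv_of_transGen

end Acc

theorem exists_transGen_self_reflTransGen_of_not_acc {α : Type*} [Finite α]
    {r : α → α → Prop} {x : α} (hx : ¬Acc r x) :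
    ∃ v, TransGen r v v ∧ ReflTransGen r v x := by
  obtain ⟨f, rfl, hf⟩ := not_acc_iff_exists_descending_chain.mp hx
  obtain ⟨m, n, hmn, heq⟩ := Finite.exists_ne_map_eq_of_infinite f
  wlog hlt : m < n generalizing m n
  · exact this n m hmn.symm heq.symm (hmn.lt_or_gt.resolve_left hlt)
  have hstep : ∀ i, r (f (Order.succ i)) (f i) := fun i => by simpa using hf i
  refine ⟨f n, ?_, ?_⟩
  · have hcycle : TransGen r (f n) (f m) := (transGen_of_succ_of_gt (fun i j => r (f i) (f j))
      (fun i _ => hstep i) hlt).lift f fun _ _ => id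
    rwa [heq] at hcycle
  · exact (reflTransGen_of_succ_of_ge (fun i j => r (f i) (f j)) (fun i _ => hstep i)
      n.zero_le).lift f fun _ _ => id

theorem not_acc_iff_exists_transGen_self_reflTransGen {α : Type*} [Finite α]
    {r : α → α → Prop} {x : α} :
    ¬Acc r x ↔ ∃ v, TransGen r v v ∧ ReflTransGen r v x :=
  ⟨exists_transGen_self_reflTransGen_of_not_acc, fun ⟨_, hvv, hvx⟩ hx =>
    (hx.inv_of_reflTransGen hvx).transGen.not_rel_self hvv⟩

theorem exists_int_path_through_arrow_iff {V : Type*} {Q : V → V → Prop} {a b : V} (hab : Q a b) :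
    (∃ f : ℤ → V, f 1 = a ∧ f 2 = b ∧ ∀ k : ℤ, Q (f k) (f (k + 1))) ↔
      (∃ g : ℕ → V, g 0 = a ∧ ∀ n, Q (g (n + 1)) (g n)) ∧
        ∃ h : ℕ → V, h 0 = b ∧ ∀ n, Q (h n) (h (n + 1)) := by
  constructor
  · rintro ⟨f, rfl, rfl, hf⟩
    refine ⟨⟨fun n => f (1 - n), by simp, fun n => ?_⟩, ⟨fun n => f (2 + n), by simp, fun n => ?_⟩⟩
    · simpa [neg_add_eq_sub] using hf (-n)
    · simpa [add_assoc] using hf (2 + n)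
  · rintro ⟨⟨g, rfl, hg⟩, ⟨h, rfl, hh⟩⟩
    refine ⟨fun k => if k ≤ 1 then g (1 - k).toNat else h (k - 2).toNat, by simp, by simp,
      fun k => ?_⟩
    rcases lt_trichotomy k 1 with hk | rfl | hk
    · have hidx : (1 - k).toNat = (1 - (k + 1)).toNat + 1 := by omega
      simpa [hk.le, show k + 1 ≤ 1 by omega, hidx] using hg _
    · simpa using hab
    · have hidx : (k + 1 - 2).toNat = (k - 2).toNat + 1 := by omega
      simpa [show ¬k ≤ 1 by omega, show ¬k + 1 ≤ 1 by omega, hidx] using hh _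

/-- In a finite quiver (encoded by its adjacency relation
`Q a b` = "there is at least one arrow from `a` to `b`"), an arrow `e : a → b`
lies in a bi-infinite directed path if and only if there is a directed cycle
upstream from `e` (a cycle from one of whose vertices `a` is reachable) and a
directed cycle downstream from `e` (a cycle one of whose vertices is reachable
from `b`). -/
theorem arrow_mem_biInfinite_path_iff {V : Type*} [Fintype V]
    (Q : V → V → Prop) (a b : V) (hab : Q a b) :
    (∃ f : ℤ → V, f 1 = a ∧ f 2 = b ∧ ∀ k : ℤ, Q (f k) (f (k + 1))) ↔
      ((∃ v w : V, Q v w ∧ Relation.ReflTransGen Q w v ∧ Relation.ReflTransGen Q v a) ∧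
       (∃ v w : V, Q v w ∧ Relation.ReflTransGen Q w v ∧ Relation.ReflTransGen Q b v)) := by
  have upstream : (∃ g : ℕ → V, g 0 = a ∧ ∀ n, Q (g (n + 1)) (g n)) ↔
      ∃ v w, Q v w ∧ ReflTransGen Q w v ∧ ReflTransGen Q v a := by
    rw [← not_acc_iff_exists_descending_chain, not_acc_iff_exists_transGen_self_reflTransGen]
    simp only [TransGen.head'_iff, ← and_assoc, exists_and_right]
  have downstream : (∃ h : ℕ → V, h 0 = b ∧ ∀ n, Q (h n) (h (n + 1))) ↔
      ∃ v w, Q v w ∧ ReflTransGen Q w v ∧ ReflTransGen Q b v := by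
    rw [← not_acc_iff_exists_descending_chain (r := swap Q),
      not_acc_iff_exists_transGen_self_reflTransGen,
      exists_congr fun v => and_congr transGen_swap reflTransGen_swap]
    simp only [TransGen.head'_iff, ← and_assoc, exists_and_right]
  rw [exists_int_path_through_arrow_iff hab, upstream, downstream]
end

section
/- Let J be the Jacobian matrix, evaluated in a field κ, of the presentation of a ring by relations r_i = a_i·a_i' − π_i⁺ − π_i⁻ (i = 1,...,m) in variables a₁,...,aₙ,a₁',...,aₘ', where π_i^± are monomials in aₘ₊₁,...,aₙ only, and suppose all the variables a₁,...,aₘ,a₁',...,aₘ' evaluate to 0 in κ while aₘ₊₁,...,aₙ and the π_i^± evaluate to nonzero elements, with π_i⁻ = −π_i⁺ in κ. Then the rank of the evaluated Jacobian matrix equals the rank of the m×(n−m) integer matrix E with E_{ij} equal to the exponent of a_j in π_i⁺ minus the exponent of a_j in π_i⁻ (for m+1 ≤ j ≤ n). -/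
/-!
Since `φ` kills both `aᵢ` and `aᵢ'`, the term `aᵢaᵢ'` contributes nothing to the evaluated
Jacobian. For a monomial `π` with exponent vector `e`, Euler's identity `aⱼ ∂π/∂aⱼ = eⱼ π` gives
`φ(∂π/∂aⱼ) = eⱼ φ(π) / φ(aⱼ)` at every frozen variable, and the other partial derivatives of
`πᵢ^±` vanish. Using `φ(πᵢ⁻) = −φ(πᵢ⁺)`, the frozen columns of the Jacobian form
`diag(−φ(πᵢ⁺)) · E · diag(φ(aⱼ)⁻¹)` and all other columns are zero. Finally, the rank of a
rational matrix does not change in the extension `κ / ℚ`.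
-/

open MvPolynomial Module Submodule Matrix

section Rank

open Set

variable {K L : Type*} [Field K] [Field L]

theorem finrank_span_range_le_of_linearIndepOn_imp {ι V W : Type*} [Finite ι]
    [AddCommGroup V] [Module K V] [AddCommGroup W] [Module L W] {v : ι → V} {w : ι → W}
    (h : ∀ s : Set ι, LinearIndepOn K v s → LinearIndepOn L w s) :
    finrank K (span K (range v)) ≤ finrank L (span L (range w)) := by
  obtain ⟨b, -, -, hspan, hb⟩ :=
    exists_linearIndepOn_extension (linearIndepOn_empty K v) (empty_subset univ)
  have : Fintype b := Fintype.ofFinite b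
  have : Module.Finite L (span L (range w)) := .span_of_finite L (finite_range w)
  have hspan_eq : span K (range v) = span K (range fun x : b => v x) := by
    refine le_antisymm (span_le.2 ?_) (span_mono (range_comp_subset_range _ _))
    rw [← image_univ, ← image_eq_range]
    exact hspan
  calc finrank K (span K (range v))
      = Fintype.card b := by rw [hspan_eq, finrank_span_eq_card hb]
    _ ≤ finrank L (span L (range fun x : b => w x)) :=
      linearIndependent_iff_card_le_finrank_span.1 (h b hb)
    _ ≤ finrank L (span L (range w)) :=
      Submodule.finrank_mono (span_mono (range_comp_subset_range _ _))

theorem Matrix.rank_map_algebraMap [Algebra K L] {m n : Type*} [Finite m] [Fintype n]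
    (A : Matrix m n K) : (A.map (algebraMap K L)).rank = A.rank := by
  rw [rank_eq_finrank_span_cols, rank_eq_finrank_span_cols]
  refine le_antisymm (finrank_span_range_le_of_linearIndepOn_imp fun s hs => ?_)
    (finrank_span_range_le_of_linearIndepOn_imp fun s hs => ?_)
  · exact linearIndependent_algebraMap_comp_iff.1 hs
  · exact linearIndependent_algebraMap_comp_iff.2 hs

theorem Matrix.rank_submatrix_of_col_eq_zero {R m ν ι : Type*} [CommSemiring R] [Fintype ν]
    [Fintype ι] (A : Matrix m ν R) (c : ι → ν) (hA : ∀ v ∉ range c, A.col v = 0) :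
    (A.submatrix id c).rank = A.rank := by
  have hspan : span R (range (A.submatrix id c).col) = span R (range A.col) := by
    refine le_antisymm (span_mono (range_comp_subset_range c A.col)) (span_le.2 ?_)
    rintro _ ⟨v, rfl⟩
    by_cases hv : v ∈ range c
    · obtain ⟨j, rfl⟩ := hv
      exact subset_span ⟨j, rfl⟩
    · rw [hA v hv]
      exact zero_mem _
  rw [rank_eq_finrank_span_cols, rank_eq_finrank_span_cols, hspan]

end Rank

namespace MvPolynomial

section CommSemiring

variable {R : Type*} [CommSemiring R]

theorem map_pderiv_monomial_one {σ κ : Type*} [Field κ] (φ : MvPolynomial σ R →+* κ) {i : σ}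
    (hi : φ (X i) ≠ 0) (s : σ →₀ ℕ) :
    φ (pderiv i (monomial s 1)) = s i * φ (monomial s 1) / φ (X i) := by
  rw [eq_div_iff hi, mul_comm, ← map_mul, X_mul_pderiv_monomial, nsmul_eq_mul, map_mul,
    map_natCast]

theorem prod_X_inl_pow_eq_monomial {ι τ : Type*} [Fintype ι] [Fintype τ] (e : ι → ℕ) :
    (∏ j, X (Sum.inl j) ^ e j : MvPolynomial (ι ⊕ τ) R)
      = monomial (Finsupp.equivFunOnFinite.symm (Sum.elim e 0)) 1 := by
  rw [monomial_eq, C_1, one_mul, Finsupp.prod_fintype _ _ (fun _ => pow_zero _),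
    Fintype.prod_sum_type]
  simp

end CommSemiring

theorem map_pderiv_X_mul_X_sub_sub {R S σ : Type*} [CommRing R] [CommRing S]
    (φ : MvPolynomial σ R →+* S) {a a' : σ} (ha : φ (X a) = 0) (ha' : φ (X a') = 0)
    (p q : MvPolynomial σ R) (v : σ) :
    φ (pderiv v (X a * X a' - p - q)) = -φ (pderiv v p) - φ (pderiv v q) := by
  simp [ha, ha']

end MvPolynomial

/-- Consider the relations
`rᵢ = aᵢ·aᵢ' − πᵢ⁺ − πᵢ⁻` (for `i = 1,…,m`) in the polynomial ring on the variables
`a₁,…,aₙ, a₁',…,aₘ'` (encoded as `Fin n ⊕ Fin m`), where `πᵢ⁺, πᵢ⁻` are monomials in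
the frozen variables `a_{m+1},…,aₙ` only, with exponent vectors `pp i`, `pm i`.
Let `φ` be an evaluation in a field `κ` (of characteristic zero, as `κ` is a residue
field of a `ℚ`-algebra) sending `a₁,…,aₘ` and `a₁',…,aₘ'` to `0`, each frozen
variable and each `πᵢ⁺` to a nonzero element, with `φ(πᵢ⁻) = −φ(πᵢ⁺)`.  Then the
rank of the evaluated Jacobian matrix of the `rᵢ` equals the rank of the
`m × (n−m)` integer matrix `E` with `E i j = pp i j − pm i j` for frozen `j`. -/
theorem jacobian_rank_eq_exchange_rank (κ : Type*) [Field κ] [CharZero κ]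
    (m n : ℕ) (hmn : m ≤ n)
    (pp pm : Fin m → Fin n → ℕ)
    (hpp : ∀ i (j : Fin n), (j : ℕ) < m → pp i j = 0)
    (hpm : ∀ i (j : Fin n), (j : ℕ) < m → pm i j = 0)
    (φ : MvPolynomial (Fin n ⊕ Fin m) ℤ →+* κ)
    (hφa : ∀ i : Fin m, φ (X (Sum.inl (Fin.castLE hmn i))) = 0)
    (hφa' : ∀ i : Fin m, φ (X (Sum.inr i)) = 0)
    (hφfrozen : ∀ j : Fin n, m ≤ (j : ℕ) → φ (X (Sum.inl j)) ≠ 0)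
    (hφπ : ∀ i : Fin m, φ (∏ j : Fin n, X (Sum.inl j) ^ pp i j) ≠ 0)
    (hφπ' : ∀ i : Fin m,
      φ (∏ j : Fin n, X (Sum.inl j) ^ pm i j)
        = - φ (∏ j : Fin n, X (Sum.inl j) ^ pp i j)) :
    Matrix.rank (Matrix.of fun (i : Fin m) (v : Fin n ⊕ Fin m) =>
        φ (pderiv v
          (X (Sum.inl (Fin.castLE hmn i)) * X (Sum.inr i)
            - (∏ j : Fin n, X (Sum.inl j) ^ pp i j)
            - ∏ j : Fin n, X (Sum.inl j) ^ pm i j)))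
      = Matrix.rank (Matrix.of fun (i : Fin m) (j : {j : Fin n // m ≤ (j : ℕ)}) =>
          ((pp i j : ℚ) - (pm i j : ℚ))) := by
  simp only [prod_X_inl_pow_eq_monomial] at hφπ hφπ' ⊢
  set J := Matrix.of fun (i : Fin m) (v : Fin n ⊕ Fin m) => _
  set E := Matrix.of fun (i : Fin m) (j : {j : Fin n // m ≤ (j : ℕ)}) =>
    ((pp i j : ℚ) - (pm i j : ℚ))
  have hJ : ∀ i v, J i v = _ := fun i v => map_pderiv_X_mul_X_sub_sub φ (hφa i) (hφa' i) _ _ v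
  set c := fun j : {j : Fin n // m ≤ (j : ℕ)} => (Sum.inl j.1 : Fin n ⊕ Fin m)
  have hzero : ∀ v ∉ Set.range c, J.col v = 0 := by
    rintro (j | k) hv <;> ext i
    · have hj : (j : ℕ) < m := not_le.1 fun hj => hv ⟨⟨j, hj⟩, rfl⟩
      simp [hJ, hpp i j hj, hpm i j hj]
    · simp [hJ]
  have hfrozen : J.submatrix id c =
      diagonal (fun i => -φ (monomial (Finsupp.equivFunOnFinite.symm (Sum.elim (pp i) 0)) 1))
        * E.map (algebraMap ℚ κ) * diagonal (fun j => (φ (X (c j)))⁻¹) := by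
    ext i j
    have hx := hφfrozen j j.2
    rw [submatrix_apply, id, hJ, map_pderiv_monomial_one φ hx, map_pderiv_monomial_one φ hx, hφπ',
      mul_diagonal, diagonal_mul]
    simp [E, c]
    ring
  rw [← rank_submatrix_of_col_eq_zero J c hzero, hfrozen, rank_mul_eq_left_of_isUnit_det,
    rank_mul_eq_right_of_isUnit_det, rank_map_algebraMap]
  · simpa [isUnit_iff_ne_zero, Finset.prod_ne_zero_iff] using hφπ
  · simpa [isUnit_iff_ne_zero, Finset.prod_ne_zero_iff, c] using
      fun j : {j : Fin n // m ≤ (j : ℕ)} => hφfrozen j.1 j.2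
end
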